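/- The optimal value of the following semidefinite program equals 3/4: maximize ⟨σ, P_accept⟩ over density matrices σ on X₀ ⊗ X₁ ⊗ G₀ ⊗ G₁ = (ℂ²)^{⊗4} and density matrices σ_B on ℂ³, subject to Tr_{G₀,G₁}(σ) = Tr_B(U₂ (|ψ⟩⟨ψ| ⊗ σ_B) U₂†), where |ψ⟩ = (1/2) Σ_{x₀,x₁∈{0,1}} |x₀ x₁⟩ ∈ X₀ ⊗ X₁, U₂ = Σ_{x₀,x₁∈{0,1}} |x₀x₁⟩⟨x₀x₁| ⊗ U_{x₀x₁} with U_{x₀x₁} = diag((−1)^{x₀}, (−1)^{x₁}, 1) acting on ℂ³, and P_accept = Σ_{x₀,x₁∈{0,1}} |x₀x₁⟩⟨x₀x₁|_{X₀⊗X₁} ⊗ |x₀x₁⟩⟨x₀x₁|_{G₀⊗G₁}. Moreover, the optimum is attained at σ_B = (1/3)·1_{ℂ³}. (This is the optimal probability with which a cheating Alice learns both of Bob's bits in the 1-out-of-2 oblivious transfer protocol.) -/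

import Mathlib

/-! STATEMENT 4: Alice's optimal cheating probability in the 1-out-of-2 oblivious transfer protocol equals 3/4, attained at σ_B = (1/3)·1. -/

open Matrix
open scoped Matrix BigOperators ComplexOrder

noncomputable section

/-- Square matrices over ℂ indexed by `α`. -/
abbrev Mat (α : Type) : Type := Matrix α α ℂ

/-- A density matrix: positive semidefinite with unit trace. -/
def IsDensity {α : Type} [Fintype α] [DecidableEq α] (ρ : Mat α) : Prop :=
  ρ.PosSemidef ∧ ρ.trace = 1

/-- Hilbert–Schmidt inner product ⟨P, Q⟩ = Tr(P† Q). -/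
def hs {α : Type} [Fintype α] (P Q : Mat α) : ℂ := (Pᴴ * Q).trace

/-- Outer product |v⟩⟨v|. -/
def outer {α : Type} (v : α → ℂ) : Mat α := fun i j => v i * star (v j)

/-- Standard basis vector |i⟩. -/
def ket {α : Type} [DecidableEq α] (i : α) : α → ℂ := fun j => if j = i then 1 else 0

/-- The embedding of Fin 2 into Fin 3. -/
def f23 (y : Fin 2) : Fin 3 := ⟨y.val, by omega⟩

/-- |φ_y⟩ = (|yy⟩ + |22⟩)/√2 ∈ ℂ³ ⊗ ℂ³. -/
def phi (y : Fin 2) : Fin 3 × Fin 3 → ℂ :=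
  fun p => (ket (f23 y, f23 y) p + ket ((2 : Fin 3), (2 : Fin 3)) p) / (Real.sqrt 2 : ℂ)

/-- Partial trace over the first tensor factor. -/
def ptrA {α β : Type} [Fintype α] (ρ : Mat (α × β)) : Mat β :=
  fun b b' => ∑ a, ρ (a, b) (a, b')

/-- |ψ⟩ = (1/2) Σ_{x₀,x₁} |x₀x₁⟩ ∈ X₀ ⊗ X₁. -/
def psiX : Fin 2 × Fin 2 → ℂ := fun _ => 1/2

/-- U_{x₀x₁} = diag((−1)^{x₀}, (−1)^{x₁}, 1) as a diagonal entry function. -/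
def Udiag (x0 x1 : Fin 2) (b : Fin 3) : ℂ :=
  if b = 0 then (-1) ^ (x0 : ℕ) else if b = 1 then (-1) ^ (x1 : ℕ) else 1

/-- U₂ = Σ_{x₀,x₁} |x₀x₁⟩⟨x₀x₁| ⊗ U_{x₀x₁}, acting on X₀ ⊗ X₁ ⊗ B. -/
def U2 : Mat (Fin 2 × Fin 2 × Fin 3) :=
  Matrix.diagonal fun p => Udiag p.1 p.2.1 p.2.2

/-- The state |ψ⟩⟨ψ| ⊗ σ_B on X₀ ⊗ X₁ ⊗ B. -/
def inState (σB : Mat (Fin 3)) : Mat (Fin 2 × Fin 2 × Fin 3) :=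
  fun p q => outer psiX (p.1, p.2.1) (q.1, q.2.1) * σB p.2.2 q.2.2

/-- Partial trace over B, the last factor of X₀ ⊗ X₁ ⊗ B. -/
def trB (ρ : Mat (Fin 2 × Fin 2 × Fin 3)) : Mat (Fin 2 × Fin 2) :=
  fun p q => ∑ b, ρ (p.1, p.2, b) (q.1, q.2, b)

/-- Partial trace over G₀ and G₁, the last two factors of X₀ ⊗ X₁ ⊗ G₀ ⊗ G₁. -/
def trG01 (σ : Mat (Fin 2 × Fin 2 × Fin 2 × Fin 2)) : Mat (Fin 2 × Fin 2) :=
  fun p q => ∑ g0, ∑ g1, σ (p.1, p.2, g0, g1) (q.1, q.2, g0, g1)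

/-- P_accept = Σ_{x₀,x₁} |x₀x₁⟩⟨x₀x₁|_{X₀⊗X₁} ⊗ |x₀x₁⟩⟨x₀x₁|_{G₀⊗G₁}. -/
def Pacc : Mat (Fin 2 × Fin 2 × Fin 2 × Fin 2) := fun p q =>
  match p, q with
  | (x0, x1, g0, g1), (x0', x1', g0', g1') =>
    ∑ u0 : Fin 2, ∑ u1 : Fin 2,
      ket (u0, u1) (x0, x1) * star (ket (u0, u1) (x0', x1')) *
      (ket (u0, u1) (g0, g1) * star (ket (u0, u1) (g0', g1')))

/-- The constraint Tr_{G₀,G₁}(σ) = Tr_B(U₂(|ψ⟩⟨ψ| ⊗ σ_B)U₂†). -/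
def OTconstraint (σ : Mat (Fin 2 × Fin 2 × Fin 2 × Fin 2)) (σB : Mat (Fin 3)) : Prop :=
  trG01 σ = trB (U2 * inState σB * U2ᴴ)

/-! Write `σ = B†B` and read each row `k` of `B` as a matrix `(x, g) ↦ B k (x, g)` on
`X₀X₁ ⊗ G₀G₁`. The `b`-th diagonal entry of `U_x` is `χ_{a_b}(x)`, where `χ_a(x) = (-1)^{a·x}` are
the characters of `(ℤ/2)²` and `a_b = (1,0), (0,1), (0,0)`. So the constraint says that contracting
the `X`-index of the rows of `B` with `χ_{a_b}` leaves squared norm `4 (σ_B)_{bb}`, and with the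
remaining character `χ_{(1,1)}` leaves nothing. Fourier inversion on `(ℤ/2)²` writes `4 B k (u, u)`
through these contractions, so by Minkowski `4 √⟨σ, P_accept⟩ ≤ 2 Σ_b √((σ_B)_{bb}) ≤ 2√3`.
Equality holds for `σ_B = 1/3` and the pure state with amplitudes `Σ_b χ_{a_b}(x) χ_{a_b}(g)`. -/

theorem sqrt_sum_norm_sq_sum_le {ι κ : Type*} [Fintype ι] [Fintype κ] (z : ι → κ → ℂ) :
    √(∑ j, ‖∑ i, z i j‖ ^ 2) ≤ ∑ i, √(∑ j, ‖z i j‖ ^ 2) := by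
  simpa [EuclideanSpace.norm_eq] using
    norm_sum_le Finset.univ fun i => (WithLp.toLp 2 (z i) : EuclideanSpace ℂ κ)

lemma sum_norm_sq_mulVec {m n : Type*} [Fintype m] [Fintype n] (C : Matrix m n ℂ) (v : n → ℂ) :
    ((∑ i, ‖(C *ᵥ v) i‖ ^ 2 : ℝ) : ℂ) = star v ⬝ᵥ ((Cᴴ * C) *ᵥ v) := by
  rw [← mulVec_mulVec, dotProduct_mulVec, ← star_mulVec]
  push_cast
  simp only [dotProduct, Pi.star_apply, ← Complex.conj_mul', Complex.star_def]

lemma hs_outer_ket {α : Type} [Fintype α] [DecidableEq α] (σ : Mat α) (i : α) :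
    hs σ (outer (ket i)) = star (σ i i) := by
  simp [hs, trace, mul_apply, outer, ket]

abbrev TwoBits : Type := Fin 2 × Fin 2

abbrev FourBits : Type := Fin 2 × Fin 2 × Fin 2 × Fin 2

def xgIndex (x g : TwoBits) : FourBits := (x.1, x.2, g.1, g.2)

lemma sum_fourBits {M : Type*} [AddCommMonoid M] (f : FourBits → M) :
    ∑ p, f p = ∑ x : TwoBits, ∑ g : TwoBits, f (xgIndex x g) := by
  simp only [Fintype.sum_prod_type, xgIndex]

lemma trG01_apply (σ : Mat FourBits) (x y : TwoBits) :
    trG01 σ x y = ∑ g : TwoBits, σ (xgIndex x g) (xgIndex y g) := by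
  simp only [trG01, Fintype.sum_prod_type, xgIndex]

lemma trace_trG01 (σ : Mat FourBits) : (trG01 σ).trace = σ.trace := by
  simp only [trace, diag, trG01_apply, sum_fourBits]

def chi (a x : TwoBits) : ℂ := (-1) ^ ((a.1 : ℕ) * x.1 + (a.2 : ℕ) * x.2)

lemma chi_comm (a x : TwoBits) : chi a x = chi x a := by
  simp only [chi, mul_comm]

lemma star_chi (a x : TwoBits) : star (chi a x) = chi a x := by
  simp [chi]

lemma chi_mul_self (a x : TwoBits) : chi a x * chi a x = 1 := by
  rw [chi, ← pow_add, ← two_mul, pow_mul]; norm_num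

lemma norm_chi (a x : TwoBits) : ‖chi a x‖ = 1 := by
  simp [chi]

lemma sum_chi_mul_chi (a b : TwoBits) : ∑ x, chi a x * chi b x = if a = b then 4 else 0 := by
  rcases a with ⟨a0, a1⟩; rcases b with ⟨b0, b1⟩
  fin_cases a0 <;> fin_cases a1 <;> fin_cases b0 <;> fin_cases b1 <;>
    norm_num [chi, Fintype.sum_prod_type]

def diagChar : Fin 3 → TwoBits := ![(1, 0), (0, 1), (0, 0)]

lemma diagChar_inj {b c : Fin 3} : diagChar b = diagChar c ↔ b = c := by
  fin_cases b <;> fin_cases c <;> decide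

lemma sum_eq_sum_diagChar_add {M : Type*} [AddCommMonoid M] (f : TwoBits → M) :
    ∑ a, f a = ∑ b, f (diagChar b) + f (1, 1) := by
  simp only [Fintype.sum_prod_type, Fin.sum_univ_two, Fin.sum_univ_three, diagChar, cons_val_zero,
    cons_val_one, cons_val]
  abel

lemma Udiag_eq_chi (x0 x1 : Fin 2) (b : Fin 3) : Udiag x0 x1 b = chi (diagChar b) (x0, x1) := by
  fin_cases b <;> simp [Udiag, chi, diagChar]

lemma trB_conj_U2_apply (σB : Mat (Fin 3)) (x y : TwoBits) :
    trB (U2 * inState σB * U2ᴴ) x y =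
      (1 / 4) * ∑ b, chi (diagChar b) x * chi (diagChar b) y * σB b b := by
  simp only [trB, U2, diagonal_conjTranspose, mul_diagonal, diagonal_mul, Finset.mul_sum]
  refine Finset.sum_congr rfl fun b _ => ?_
  simp only [inState, outer, psiX, Pi.star_apply, Udiag_eq_chi, star_chi]
  norm_num
  ring

lemma dotProduct_trB_conj_U2_mulVec_chi (σB : Mat (Fin 3)) (a : TwoBits) :
    star (chi a) ⬝ᵥ (trB (U2 * inState σB * U2ᴴ) *ᵥ chi a) =
      4 * ∑ b, if diagChar b = a then σB b b else 0 := by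
  calc star (chi a) ⬝ᵥ (trB (U2 * inState σB * U2ᴴ) *ᵥ chi a)
      = ∑ b, (1 / 4) * σB b b *
          ((∑ x, chi a x * chi (diagChar b) x) * ∑ y, chi a y * chi (diagChar b) y) := by
        simp only [dotProduct, mulVec, Pi.star_apply, star_chi, trB_conj_U2_apply,
          Finset.mul_sum, Finset.sum_mul]
        refine ((Finset.sum_congr rfl fun x _ => Finset.sum_comm).trans Finset.sum_comm).trans
          (Finset.sum_congr rfl fun b _ => Finset.sum_congr rfl fun x _ =>
            Finset.sum_congr rfl fun y _ => ?_)
        ring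
    _ = 4 * ∑ b, if diagChar b = a then σB b b else 0 := by
        simp only [sum_chi_mul_chi, Finset.mul_sum, eq_comm (a := a)]
        refine Finset.sum_congr rfl fun b _ => ?_
        split_ifs <;> ring

lemma trace_trB_conj_U2 (σB : Mat (Fin 3)) :
    (trB (U2 * inState σB * U2ᴴ)).trace = σB.trace := by
  simp only [trace, diag, trB_conj_U2_apply, chi_mul_self, one_mul, ← Finset.mul_sum]
  rw [Finset.sum_comm]
  simp [← Finset.mul_sum]

lemma OTconstraint.trace_eq {σ : Mat FourBits} {σB : Mat (Fin 3)} (h : OTconstraint σ σB) :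
    σ.trace = σB.trace := by
  rw [← trace_trG01, h, trace_trB_conj_U2]

lemma Pacc_eq_sum : Pacc = ∑ u : TwoBits, outer (ket (xgIndex u u)) := by
  ext ⟨x0, x1, g0, g1⟩ ⟨y0, y1, h0, h1⟩
  simp only [Pacc, Matrix.sum_apply, outer, ket, xgIndex, Fintype.sum_prod_type, Prod.mk.injEq]
  refine Finset.sum_congr rfl fun u0 _ => Finset.sum_congr rfl fun u1 _ => ?_
  split_ifs <;> simp_all

lemma re_hs_Pacc (σ : Mat FourBits) :
    (hs σ Pacc).re = ∑ u : TwoBits, (σ (xgIndex u u) (xgIndex u u)).re := by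
  have hs_sum : hs σ Pacc = ∑ u : TwoBits, hs σ (outer (ket (xgIndex u u))) := by
    simp only [Pacc_eq_sum, hs, Matrix.mul_sum, trace_sum]
  simp [hs_sum, hs_outer_ket]

def sliceMatrix (B : Mat FourBits) : Matrix (TwoBits × FourBits) TwoBits ℂ :=
  fun gk x => B gk.2 (xgIndex x gk.1)

lemma trG01_conjTranspose_mul_self (B : Mat FourBits) :
    trG01 (Bᴴ * B) = (sliceMatrix B)ᴴ * sliceMatrix B := by
  ext x y
  simp only [trG01_apply, mul_apply, conjTranspose_apply, sliceMatrix, Fintype.sum_prod_type]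

lemma sum_chi_mul_sliceMatrix_mulVec_chi (B : Mat FourBits) (i : TwoBits × FourBits) :
    ∑ a, chi a i.1 * (sliceMatrix B *ᵥ chi a) i = 4 * B i.2 (xgIndex i.1 i.1) :=
  calc ∑ a, chi a i.1 * (sliceMatrix B *ᵥ chi a) i
      = ∑ x, (∑ a, chi i.1 a * chi x a) * B i.2 (xgIndex x i.1) := by
        simp only [sliceMatrix, mulVec, dotProduct, Finset.mul_sum, Finset.sum_mul]
        rw [Finset.sum_comm]
        refine Finset.sum_congr rfl fun x _ => Finset.sum_congr rfl fun a _ => ?_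
        rw [chi_comm a i.1, chi_comm a x]
        ring
    _ = 4 * B i.2 (xgIndex i.1 i.1) := by simp [sum_chi_mul_chi]

lemma re_hs_conjTranspose_mul_self_Pacc (B : Mat FourBits) :
    (hs (Bᴴ * B) Pacc).re = ∑ i : TwoBits × FourBits, ‖B i.2 (xgIndex i.1 i.1)‖ ^ 2 := by
  rw [re_hs_Pacc,
    Fintype.sum_prod_type (f := fun i : TwoBits × FourBits => ‖B i.2 (xgIndex i.1 i.1)‖ ^ 2)]
  refine Finset.sum_congr rfl fun u _ => ?_
  simp only [mul_apply, conjTranspose_apply, Complex.star_def, Complex.conj_mul', Complex.re_sum]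
  norm_cast

lemma four_mul_sqrt_re_hs_Pacc_le (B : Mat FourBits) :
    4 * √((hs (Bᴴ * B) Pacc).re) ≤ ∑ a, √(∑ i, ‖(sliceMatrix B *ᵥ chi a) i‖ ^ 2) :=
  calc 4 * √((hs (Bᴴ * B) Pacc).re)
      = √(∑ i, ‖∑ a, chi a i.1 * (sliceMatrix B *ᵥ chi a) i‖ ^ 2) := by
        simp only [sum_chi_mul_sliceMatrix_mulVec_chi, norm_mul, mul_pow, ← Finset.mul_sum,
          re_hs_conjTranspose_mul_self_Pacc]
        rw [Real.sqrt_mul (by positivity), RCLike.norm_ofNat, Real.sqrt_sq (by norm_num)]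
    _ ≤ ∑ a, √(∑ i, ‖chi a i.1 * (sliceMatrix B *ᵥ chi a) i‖ ^ 2) :=
        sqrt_sum_norm_sq_sum_le _
    _ = ∑ a, √(∑ i, ‖(sliceMatrix B *ᵥ chi a) i‖ ^ 2) := by
        simp only [norm_mul, norm_chi, one_mul]

theorem re_hs_Pacc_le_of_OTconstraint {σ : Mat FourBits} {σB : Mat (Fin 3)} (hσ : σ.PosSemidef)
    (hσB : σB.trace = 1) (h : OTconstraint σ σB) : (hs σ Pacc).re ≤ 3 / 4 := by
  obtain ⟨B, rfl⟩ : ∃ B : Mat FourBits, σ = Bᴴ * B := by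
    open scoped MatrixOrder in exact CStarAlgebra.nonneg_iff_eq_star_mul_self.mp hσ.nonneg
  set N : TwoBits → ℝ := fun a => ∑ i, ‖(sliceMatrix B *ᵥ chi a) i‖ ^ 2
  have hN : ∀ a, (N a : ℂ) = 4 * ∑ b, if diagChar b = a then σB b b else 0 := fun a => by
    rw [sum_norm_sq_mulVec, ← trG01_conjTranspose_mul_self, h, dotProduct_trB_conj_U2_mulVec_chi]
  have hN_diagChar : ∀ c, N (diagChar c) = 4 * (σB c c).re := fun c => by
    simpa [diagChar_inj] using congrArg Complex.re (hN (diagChar c))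
  have hN_11 : N (1, 1) = 0 := by
    have hne : ∀ b, diagChar b ≠ (1, 1) := by decide
    simpa [hne] using hN (1, 1)
  have hdiag_nonneg : ∀ c, 0 ≤ (σB c c).re := fun c => by
    have : 0 ≤ N (diagChar c) := by positivity
    linarith [hN_diagChar c]
  have hdiag_sum : ∑ c, (σB c c).re = 1 := by
    simpa [trace] using congrArg Complex.re hσB
  have hCS : (∑ c, √((σB c c).re)) ^ 2 ≤ 3 := by
    simpa [Real.sq_sqrt (hdiag_nonneg _), hdiag_sum] using
      sq_sum_le_card_mul_sum_sq (s := Finset.univ) (f := fun c => √((σB c c).re))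
  have key : 4 * √((hs (Bᴴ * B) Pacc).re) ≤ ∑ a, √(N a) := four_mul_sqrt_re_hs_Pacc_le B
  rw [sum_eq_sum_diagChar_add fun a => √(N a)] at key
  simp only [hN_diagChar, hN_11, Real.sqrt_zero, add_zero, Real.sqrt_mul' 4 (hdiag_nonneg _),
    ← Finset.mul_sum] at key
  have hobj : 0 ≤ (hs (Bᴴ * B) Pacc).re := by
    rw [re_hs_conjTranspose_mul_self_Pacc]; positivity
  have hsqrt4 : √(4 : ℝ) = 2 := by
    rw [show (4 : ℝ) = 2 ^ 2 by norm_num, Real.sqrt_sq zero_le_two]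
  rw [hsqrt4] at key
  rw [← Real.sq_sqrt hobj]
  nlinarith [Real.sqrt_nonneg (hs (Bᴴ * B) Pacc).re]

def optAmp (x g : TwoBits) : ℂ := ∑ b, chi (diagChar b) x * chi (diagChar b) g

lemma optAmp_self (u : TwoBits) : optAmp u u = 3 := by
  simp [optAmp, chi_mul_self]

lemma sum_optAmp_mul_optAmp (x y : TwoBits) :
    ∑ g, optAmp x g * optAmp y g = 4 * ∑ b, chi (diagChar b) x * chi (diagChar b) y :=
  calc ∑ g, optAmp x g * optAmp y g
      = ∑ b, ∑ c, chi (diagChar b) x * chi (diagChar c) y *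
          ∑ g, chi (diagChar b) g * chi (diagChar c) g := by
        simp only [optAmp, Finset.sum_mul_sum]
        rw [Finset.sum_comm]
        refine Finset.sum_congr rfl fun b _ => ?_
        rw [Finset.sum_comm]
        refine Finset.sum_congr rfl fun c _ => ?_
        rw [Finset.mul_sum]
        exact Finset.sum_congr rfl fun g _ => by ring
    _ = 4 * ∑ b, chi (diagChar b) x * chi (diagChar b) y := by
        simp [sum_chi_mul_chi, diagChar_inj, Finset.mul_sum, mul_comm]

def optState : Mat FourBits := (1 / 48 : ℂ) • outer fun p => optAmp (p.1, p.2.1) p.2.2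

lemma optState_apply (x g y h : TwoBits) :
    optState (xgIndex x g) (xgIndex y h) = (1 / 48) * (optAmp x g * optAmp y h) := by
  simp [optState, outer, xgIndex, optAmp, star_sum, star_chi]

lemma isDensity_third_smul_one : IsDensity ((1 / 3 : ℂ) • (1 : Mat (Fin 3))) := by
  refine ⟨PosSemidef.one.smul (by positivity), ?_⟩
  simp [trace_smul]

lemma OTconstraint_optState : OTconstraint optState ((1 / 3 : ℂ) • 1) := by
  ext x y
  rw [trG01_apply, trB_conj_U2_apply]
  simp only [optState_apply]
  rw [← Finset.mul_sum, sum_optAmp_mul_optAmp]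
  simp only [Matrix.smul_apply, one_apply_eq, smul_eq_mul, Finset.mul_sum]
  exact Finset.sum_congr rfl fun b _ => by ring

lemma isDensity_optState : IsDensity optState := by
  refine ⟨(posSemidef_vecMulVec_self_star _).smul (by positivity), ?_⟩
  rw [OTconstraint_optState.trace_eq, isDensity_third_smul_one.2]

lemma re_hs_optState_Pacc : (hs optState Pacc).re = 3 / 4 := by
  norm_num [re_hs_Pacc, optState_apply, optAmp_self]

theorem oblivious_transfer_cheating_Alice :
    IsGreatest
      {x : ℝ | ∃ (σ : Mat (Fin 2 × Fin 2 × Fin 2 × Fin 2)) (σB : Mat (Fin 3)),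
        IsDensity σ ∧ IsDensity σB ∧ OTconstraint σ σB ∧
        x = (hs σ Pacc).re}
      (3/4)
    ∧ ∃ (σ : Mat (Fin 2 × Fin 2 × Fin 2 × Fin 2)) (σB : Mat (Fin 3)),
        IsDensity σ ∧ IsDensity σB ∧ OTconstraint σ σB ∧
        σB = (1/3 : ℂ) • (1 : Mat (Fin 3)) ∧
        (hs σ Pacc).re = 3/4 := by
  refine ⟨⟨⟨optState, _, isDensity_optState, isDensity_third_smul_one, OTconstraint_optState,
      re_hs_optState_Pacc.symm⟩, ?_⟩,
    optState, _, isDensity_optState, isDensity_third_smul_one, OTconstraint_optState, rfl,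
      re_hs_optState_Pacc⟩
  rintro x ⟨σ, σB, hσ, hσB, hconstr, rfl⟩
  exact re_hs_Pacc_le_of_OTconstraint hσ.1 hσB.2 hconstr

end
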